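/- Let f : ℤ_N → ℂ be nonzero and let f̂(m) = N^{-1/2} Σ_{t∈ℤ_N} f(t) exp(-2πimt/N). Then |supp(f)| · |supp(f̂)| ≥ N. -/

import Mathlib

open scoped BigOperators Classical
noncomputable section

/-- One-dimensional discrete Fourier transform on ℤ_N with unitary normalization. -/
def dft1 (N : ℕ) [NeZero N] (f : ZMod N → ℂ) : ZMod N → ℂ :=
  fun m => ((1 / Real.sqrt N : ℝ) : ℂ) *
    ∑ t : ZMod N, f t *
      Complex.exp (-2 * Real.pi * Complex.I * (((m.val * t.val : ℕ) : ℂ) / (N : ℂ)))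

/-! The Fourier inversion formula bounds `N ‖Φ‖∞ = ‖𝓕 (𝓕 Φ)‖∞` by `|supp 𝓕 Φ| ‖𝓕 Φ‖∞`, and the
trivial bound on each coefficient gives `‖𝓕 Φ‖∞ ≤ |supp Φ| ‖Φ‖∞`; dividing by `‖Φ‖∞ > 0`
yields `N ≤ |supp Φ| |supp 𝓕 Φ|`. -/

open Finset

lemma Finset.sum_norm_le_card_support_mul {α E : Type*} [Fintype α] [SeminormedAddCommGroup E]
    {g : α → E} {M : ℝ} (hM : ∀ j, ‖g j‖ ≤ M) : ∑ j, ‖g j‖ ≤ #{j | g j ≠ 0} * M := by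
  calc ∑ j, ‖g j‖ = ∑ j with g j ≠ 0, ‖g j‖ := by
        refine (sum_subset (subset_univ _) fun j _ hj => ?_).symm
        simp_all
    _ ≤ ∑ _j with g _j ≠ 0, M := sum_le_sum fun j _ => hM j
    _ = #{j | g j ≠ 0} * M := by rw [sum_const, nsmul_eq_mul]

namespace ZMod

variable {N : ℕ} [NeZero N]

lemma norm_dft_apply_le {E : Type*} [SeminormedAddCommGroup E] [NormedSpace ℂ E]
    (Φ : ZMod N → E) (k : ZMod N) : ‖𝓕 Φ k‖ ≤ ∑ j, ‖Φ j‖ := by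
  rw [dft_apply]
  refine (norm_sum_le _ _).trans_eq (sum_congr rfl fun j _ => ?_)
  rw [norm_smul, stdAddChar_apply, Circle.norm_coe, one_mul]

theorem le_card_support_mul_card_support_dft {E : Type*} [NormedAddCommGroup E]
    [NormedSpace ℂ E] {Φ : ZMod N → E} (hΦ : Φ ≠ 0) :
    N ≤ #{j | Φ j ≠ 0} * #{k | 𝓕 Φ k ≠ 0} := by
  obtain ⟨t₀, -, hmax⟩ := exists_max_image univ (fun t => ‖Φ t‖) univ_nonempty
  have hM : 0 < ‖Φ t₀‖ := by
    obtain ⟨t, ht⟩ := Function.ne_iff.mp hΦ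
    exact (norm_pos_iff.mpr ht).trans_le (hmax t (mem_univ t))
  have hdft : ∀ k, ‖𝓕 Φ k‖ ≤ #{j | Φ j ≠ 0} * ‖Φ t₀‖ := fun k =>
    (norm_dft_apply_le Φ k).trans
      (sum_norm_le_card_support_mul fun t => hmax t (mem_univ t))
  have key : (N : ℝ) * ‖Φ t₀‖ ≤ #{k | 𝓕 Φ k ≠ 0} * (#{j | Φ j ≠ 0} * ‖Φ t₀‖) :=
    calc (N : ℝ) * ‖Φ t₀‖ = ‖𝓕 (𝓕 Φ) (-t₀)‖ := by simp [dft_dft, norm_smul]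
      _ ≤ ∑ k, ‖𝓕 Φ k‖ := norm_dft_apply_le _ _
      _ ≤ _ := sum_norm_le_card_support_mul hdft
  rw [mul_left_comm, ← mul_assoc] at key
  exact_mod_cast le_of_mul_le_mul_right key hM

end ZMod

open ZMod in
lemma dft1_eq_smul_dft (N : ℕ) [NeZero N] (f : ZMod N → ℂ) :
    dft1 N f = ((1 / Real.sqrt N : ℝ) : ℂ) • 𝓕 f := by
  ext m
  rw [dft1, Pi.smul_apply, dft_apply, smul_eq_mul]
  congr 1
  refine sum_congr rfl fun t _ => ?_
  have h : -(t * m) = ((-(m.val * t.val : ℕ) : ℤ) : ZMod N) := by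
    push_cast [natCast_val, cast_id]
    ring
  rw [smul_eq_mul, mul_comm, h, stdAddChar_coe]
  push_cast
  ring_nf

/-- Discrete uncertainty principle: `|supp f| * |supp f̂| ≥ N` for nonzero `f : ℤ_N → ℂ`. -/
theorem one_dim_uncertainty (N : ℕ) [NeZero N] (f : ZMod N → ℂ) (hf : f ≠ 0) :
    N ≤
      (Finset.univ.filter fun t : ZMod N => f t ≠ 0).card *
      (Finset.univ.filter fun m : ZMod N => dft1 N f m ≠ 0).card := by
  have hc : ((1 / Real.sqrt N : ℝ) : ℂ) ≠ 0 := by simp [NeZero.ne N]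
  simpa only [dft1_eq_smul_dft, Pi.smul_apply, smul_ne_zero_iff, hc, ne_eq, not_false_eq_true,
    true_and] using ZMod.le_card_support_mul_card_support_dft hf
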